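/- Let A : ℝ → Matrix n n ℂ be a continuous complex matrix-valued function and let Y : ℝ → Matrix n n ℂ satisfy Y'(s) = A(s) · Y(s) for all s and Y(0) = I. If ∫₀^t ‖A(τ)‖₂ dτ < π, then the spectrum of Y(t) is contained in ℂ \ (-∞,0]; in particular, Y(t) has no eigenvalue that is a non-positive real number. -/

import Mathlib

attribute [local instance] Matrix.normedAddCommGroup Matrix.normedSpace

/-- The spectral norm of a complex matrix: the operator norm of the associated linear map
between Euclidean spaces. -/
noncomputable def l2norm {n : Type*} [Fintype n] [DecidableEq n] (A : Matrix n n ℂ) : ℝ :=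
  ‖Matrix.toEuclideanCLM (𝕜 := ℂ) A‖

/-!
For an eigenvector `v` of `Y t` with eigenvalue `x ≤ 0`, `u s = Y s v` solves `u' = A u`.
Grönwall's inequality keeps `u` away from `0`, and the direction `u / ‖u‖` moves on the unit sphere
with speed at most `‖A‖₂`, so the angle between `u 0` and `u t` is at most `∫₀ᵗ ‖A‖₂ < π`.
But `u t = x • u 0` with `x < 0` makes that angle `π`.
-/

open Set Real InnerProductGeometry
open scoped RealInnerProductSpace

section Gronwall

variable {F : Type*} [NormedAddCommGroup F] [NormedSpace ℝ F]

theorem eq_zero_of_norm_deriv_le_mul_norm_of_eq_zero_left {u u' : ℝ → F} {K a b : ℝ}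
    (hu : ∀ s ∈ Icc a b, HasDerivAt u (u' s) s) (hb : u b = 0)
    (bound : ∀ s ∈ Icc a b, ‖u' s‖ ≤ K * ‖u s‖) : ∀ s ∈ Icc a b, u s = 0 := by
  have hneg : ∀ σ ∈ Icc (-b) (-a), -σ ∈ Icc a b := fun σ hσ =>
    ⟨by linarith [hσ.2], by linarith [hσ.1]⟩
  have hv : ∀ σ ∈ Icc (-b) (-a), HasDerivAt (fun σ => u (-σ)) (-u' (-σ)) σ := fun σ hσ => by
    simpa [Function.comp_def] using (hu (-σ) (hneg σ hσ)).scomp σ (hasDerivAt_neg σ)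
  intro s hs
  simpa using eq_zero_of_abs_deriv_le_mul_abs_self_of_eq_zero_right
    (fun σ hσ => (hv σ hσ).continuousAt.continuousWithinAt)
    (fun σ hσ => (hv σ (Ico_subset_Icc_self hσ)).hasDerivWithinAt) (by simpa using hb)
    (fun σ hσ => by simpa using bound (-σ) (hneg σ (Ico_subset_Icc_self hσ))) (-s)
    ⟨by linarith [hs.2], by linarith [hs.1]⟩

end Gronwall

section Sphere

variable {E : Type*} [NormedAddCommGroup E] [InnerProductSpace ℝ E]

theorem real_inner_deriv_eq_zero_of_norm_eqOn {w : ℝ → E} {w' : E} {s : Set ℝ} {x : ℝ}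
    (hs : UniqueDiffWithinAt ℝ s x) (hw : HasDerivWithinAt w w' s x)
    (hnorm : ∀ y ∈ s, ‖w y‖ = ‖w x‖) : ⟪w x, w'⟫ = 0 := by
  have hconst : HasDerivWithinAt (‖w ·‖ ^ 2) 0 s x :=
    (hasDerivWithinAt_const x s (‖w x‖ ^ 2)).congr (fun y hy => by rw [hnorm y hy]) rfl
  have := hs.eq_deriv _ hw.norm_sq hconst
  linarith

theorem abs_real_inner_le_sqrt_one_sub_sq_mul_norm {p q d : E} (hp : ‖p‖ = 1) (hq : ‖q‖ = 1)
    (hqd : ⟪q, d⟫ = 0) : |⟪p, d⟫| ≤ √(1 - ⟪p, q⟫ ^ 2) * ‖d‖ := by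
  have hproj : ⟪p - ⟪p, q⟫ • q, d⟫ = ⟪p, d⟫ := by
    rw [inner_sub_left, real_inner_smul_left, hqd, mul_zero, sub_zero]
  have hnorm : ‖p - ⟪p, q⟫ • q‖ = √(1 - ⟪p, q⟫ ^ 2) := by
    rw [← Real.sqrt_sq (norm_nonneg _), norm_sub_sq_real, real_inner_smul_right, norm_smul,
      hp, hq, Real.norm_eq_abs, mul_one, sq_abs]
    congr 1
    ring
  rw [← hproj, ← hnorm]
  exact abs_real_inner_le_norm _ _

theorem cos_le_inner_of_norm_deriv_lt {w w' : ℝ → E} {φ φ' : ℝ → ℝ} {a b : ℝ}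
    (hw : ∀ s ∈ Icc a b, HasDerivAt w (w' s) s) (hnorm : ∀ s ∈ Icc a b, ‖w s‖ = 1)
    (hφ : ∀ s ∈ Icc a b, HasDerivAt φ (φ' s) s) (hφ_mem : ∀ s ∈ Icc a b, φ s ∈ Ioo 0 π)
    (hlt : ∀ s ∈ Icc a b, ‖w' s‖ < φ' s) : ∀ s ∈ Icc a b, cos (φ s) ≤ ⟪w a, w s⟫ := by
  have hf' : ∀ s ∈ Icc a b, HasDerivAt (fun s => -⟪w a, w s⟫) (-⟪w a, w' s⟫) s := fun s hs =>
    ((hasDerivAt_const s (w a)).inner ℝ (hw s hs)).neg.congr_deriv (by simp)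
  have hB' : ∀ s ∈ Icc a b, HasDerivAt (fun s => -cos (φ s)) (sin (φ s) * φ' s) s :=
    fun s hs => ((hφ s hs).cos.neg).congr_deriv (by ring)
  -- at a contact point `w' x ⊥ w x`, and `w a` has component of length `sin (φ x)` off `w x`
  have touching :
      ∀ x ∈ Ico a b, -⟪w a, w x⟫ = -cos (φ x) → -⟪w a, w' x⟫ < sin (φ x) * φ' x := by
    intro x hx hfx
    have hxI : x ∈ Icc a b := Ico_subset_Icc_self hx
    have horth : ⟪w x, w' x⟫ = 0 :=
      real_inner_deriv_eq_zero_of_norm_eqOn (uniqueDiffOn_Icc (hx.1.trans_lt hx.2) x hxI)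
        (hw x hxI).hasDerivWithinAt fun y hy => by rw [hnorm y hy, hnorm x hxI]
    have hsin : 0 < sin (φ x) := sin_pos_of_pos_of_lt_pi (hφ_mem x hxI).1 (hφ_mem x hxI).2
    have hbound := abs_real_inner_le_sqrt_one_sub_sq_mul_norm (d := w' x)
      (hnorm a (left_mem_Icc.2 (hx.1.trans hx.2.le))) (hnorm x hxI) horth
    rw [show ⟪w a, w x⟫ = cos (φ x) by linarith, ← sin_sq, sqrt_sq hsin.le] at hbound
    calc -⟪w a, w' x⟫ ≤ sin (φ x) * ‖w' x‖ := (neg_le_abs _).trans hbound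
      _ < sin (φ x) * φ' x := mul_lt_mul_of_pos_left (hlt x hxI) hsin
  intro s hs
  have hab : a ≤ b := hs.1.trans hs.2
  have hwa : ⟪w a, w a⟫ = 1 := by
    rw [real_inner_self_eq_norm_sq, hnorm a (left_mem_Icc.2 hab), one_pow]
  have := image_le_of_deriv_right_lt_deriv_boundary'
    (fun s hs => (hf' s hs).continuousAt.continuousWithinAt)
    (fun s hs => (hf' s (Ico_subset_Icc_self hs)).hasDerivWithinAt)
    (by simp only [hwa]; linarith [cos_le_one (φ a)])
    (fun s hs => (hB' s hs).continuousAt.continuousWithinAt)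
    (fun s hs => (hB' s (Ico_subset_Icc_self hs)).hasDerivWithinAt) touching hs
  linarith

theorem angle_le_integral_of_norm_deriv_le {w w' : ℝ → E} {g : ℝ → ℝ} {a b : ℝ} (hab : a ≤ b)
    (hw : ∀ s ∈ Icc a b, HasDerivAt w (w' s) s) (hnorm : ∀ s ∈ Icc a b, ‖w s‖ = 1)
    (hg : Continuous g) (hbound : ∀ s ∈ Icc a b, ‖w' s‖ ≤ g s) :
    angle (w a) (w b) ≤ ∫ s in a..b, g s := by
  set L := ∫ s in a..b, g s
  refine le_of_forall_pos_le_add fun δ hδ => ?_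
  rcases le_or_gt π (L + δ) with hπ | hπ
  · exact (angle_le_pi _ _).trans hπ
  -- the slack `ε` makes `‖w'‖ < φ'` strict, as the comparison requires
  set ε := δ / (b - a + 1)
  have hε : 0 < ε := div_pos hδ (by linarith)
  have hεb : ε * (b - a + 1) = δ := div_mul_cancel₀ δ (by linarith)
  set φ : ℝ → ℝ := fun s => (∫ τ in a..s, g τ) + ε * (s - a + 1)
  have hφ : ∀ s, HasDerivAt φ (g s + ε) s := fun s =>
    (hg.integral_hasStrictDerivAt a s).hasDerivAt.add
      (((hasDerivAt_id s).sub_const a).add_const 1 |>.const_mul ε |>.congr_deriv (by simp))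
  have hφb : φ b = L + δ := by simp only [φ, L, hεb]
  have hint_nonneg : ∀ s ∈ Icc a b, ∀ r ∈ Icc s b, 0 ≤ ∫ τ in s..r, g τ := fun s hs r hr =>
    intervalIntegral.integral_nonneg hr.1 fun τ hτ =>
      (norm_nonneg _).trans (hbound τ ⟨hs.1.trans hτ.1, hτ.2.trans hr.2⟩)
  have hφ_mem : ∀ s ∈ Icc a b, φ s ∈ Ioo 0 π := by
    intro s hs
    have hsplit := intervalIntegral.integral_add_adjacent_intervals
      (hg.intervalIntegrable (μ := MeasureTheory.volume) a s) (hg.intervalIntegrable s b)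
    have h₁ := hint_nonneg a (left_mem_Icc.2 hab) s hs
    have h₂ := hint_nonneg s hs b (right_mem_Icc.2 hs.2)
    have h₃ : 0 < ε * (s - a + 1) := mul_pos hε (by linarith [hs.1])
    have h₄ : ε * (s - a + 1) ≤ ε * (b - a + 1) := by gcongr; exact hs.2
    constructor <;> simp only [φ] <;> linarith
  have hcos := cos_le_inner_of_norm_deriv_lt hw hnorm (fun s _ => hφ s) hφ_mem
    (fun s hs => (hbound s hs).trans_lt (lt_add_of_pos_right _ hε)) b (right_mem_Icc.2 hab)
  have hφb_mem := hφ_mem b (right_mem_Icc.2 hab)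
  calc angle (w a) (w b) = arccos ⟪w a, w b⟫ := by
        rw [angle, hnorm a (left_mem_Icc.2 hab), hnorm b (right_mem_Icc.2 hab), mul_one, div_one]
    _ ≤ arccos (cos (φ b)) := arccos_le_arccos hcos
    _ = L + δ := by rw [arccos_cos hφb_mem.1.le hφb_mem.2.le, hφb]

theorem HasDerivAt.inv_norm_smul {u : ℝ → E} {u' : E} {x : ℝ} (hu : HasDerivAt u u' x)
    (hx : u x ≠ 0) :
    HasDerivAt (fun s => ‖u s‖⁻¹ • u s)
      (‖u x‖⁻¹ • (u' - ⟪‖u x‖⁻¹ • u x, u'⟫ • (‖u x‖⁻¹ • u x))) x := by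
  have hr : ‖u x‖ ≠ 0 := norm_ne_zero_iff.2 hx
  have hnorm : HasDerivAt (‖u ·‖) (⟪u x, u'⟫ / ‖u x‖) x := by
    have := hu.norm_sq.sqrt (pow_ne_zero 2 hr)
    simp only [sqrt_sq (norm_nonneg _)] at this
    exact this.congr_deriv (by field_simp)
  refine ((hnorm.inv hr).smul hu).congr_deriv ?_
  rw [real_inner_smul_left]
  match_scalars
  · rfl
  · field_simp

theorem norm_sub_real_inner_smul_le {n : E} (hn : ‖n‖ = 1) (v : E) :
    ‖v - ⟪n, v⟫ • n‖ ≤ ‖v‖ := by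
  have : ‖v - ⟪n, v⟫ • n‖ ^ 2 = ‖v‖ ^ 2 - ⟪n, v⟫ ^ 2 := by
    rw [norm_sub_sq_real, real_inner_smul_right, norm_smul, hn, Real.norm_eq_abs, mul_one, sq_abs,
      real_inner_comm]
    ring
  exact le_of_sq_le_sq (by nlinarith) (norm_nonneg _)

theorem angle_le_integral_of_norm_deriv_le_mul_norm {u u' : ℝ → E} {g : ℝ → ℝ} {a b : ℝ}
    (hab : a ≤ b) (hu : ∀ s ∈ Icc a b, HasDerivAt u (u' s) s) (hu0 : ∀ s ∈ Icc a b, u s ≠ 0)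
    (hg : Continuous g) (hbound : ∀ s ∈ Icc a b, ‖u' s‖ ≤ g s * ‖u s‖) :
    angle (u a) (u b) ≤ ∫ s in a..b, g s := by
  have hunit : ∀ s ∈ Icc a b, ‖‖u s‖⁻¹ • u s‖ = 1 := fun s hs => norm_smul_inv_norm (hu0 s hs)
  have hw_bound : ∀ s ∈ Icc a b,
      ‖‖u s‖⁻¹ • (u' s - ⟪‖u s‖⁻¹ • u s, u' s⟫ • (‖u s‖⁻¹ • u s))‖ ≤ g s := by
    intro s hs
    have hr : 0 < ‖u s‖ := norm_pos_iff.2 (hu0 s hs)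
    rw [norm_smul, norm_inv, norm_norm, inv_mul_le_iff₀ hr, mul_comm]
    exact (norm_sub_real_inner_smul_le (hunit s hs) _).trans (hbound s hs)
  have := angle_le_integral_of_norm_deriv_le hab
    (fun s hs => (hu s hs).inv_norm_smul (hu0 s hs)) hunit hg hw_bound
  rwa [angle_smul_left_of_pos _ _ (inv_pos.2 (norm_pos_iff.2 (hu0 a (left_mem_Icc.2 hab)))),
    angle_smul_right_of_pos _ _ (inv_pos.2 (norm_pos_iff.2 (hu0 b (right_mem_Icc.2 hab))))] at this

end Sphere

section Matrix

variable {n : Type*} [Fintype n] [DecidableEq n]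

theorem continuous_l2norm : Continuous (l2norm : Matrix n n ℂ → ℝ) :=
  continuous_norm.comp <| LinearMap.continuous_of_finiteDimensional
    (Matrix.toEuclideanCLM (n := n) (𝕜 := ℂ)).toAlgEquiv.toLinearMap

theorem HasDerivAt.toEuclideanCLM_apply {Y : ℝ → Matrix n n ℂ} {Y' : Matrix n n ℂ} {s : ℝ}
    (h : HasDerivAt Y Y' s) (v : EuclideanSpace ℂ n) :
    HasDerivAt (fun s => Matrix.toEuclideanCLM (𝕜 := ℂ) (Y s) v)
      (Matrix.toEuclideanCLM (𝕜 := ℂ) Y' v) s := by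
  let L : Matrix n n ℂ →L[ℂ] EuclideanSpace ℂ n := (ContinuousLinearMap.apply ℂ _ v).comp
    (Matrix.toEuclideanCLM (n := n) (𝕜 := ℂ)).toAlgEquiv.toLinearMap.toContinuousLinearMap
  exact (L.restrictScalars ℝ).hasFDerivAt.comp_hasDerivAt s h

theorem exists_toEuclideanCLM_apply_eq_smul_of_mem_spectrum {M : Matrix n n ℂ} {μ : ℂ}
    (h : μ ∈ spectrum ℂ M) :
    ∃ v : EuclideanSpace ℂ n, v ≠ 0 ∧ Matrix.toEuclideanCLM (𝕜 := ℂ) M v = μ • v := by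
  rw [← Matrix.spectrum_toLpLin 2, ← Module.End.hasEigenvalue_iff_mem_spectrum] at h
  obtain ⟨v, hv⟩ := h.exists_hasEigenvector
  exact ⟨v, hv.2, hv.apply_eq_smul⟩

end Matrix

/-- If `Y` is the fundamental solution of `Y' = A(t) Y`, `Y(0) = I`, with `A` complex and
continuous, and `∫₀^t ‖A(τ)‖₂ dτ < π`, then the spectrum of `Y(t)` is contained in
`ℂ \ (-∞, 0]`: `Y(t)` has no eigenvalue that is a non-positive real number. -/
theorem magnus_stmt3 {n : Type*} [Fintype n] [DecidableEq n]
    (A : ℝ → Matrix n n ℂ) (hA : Continuous A)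
    (Y : ℝ → Matrix n n ℂ)
    (hY : ∀ s : ℝ, HasDerivAt Y (A s * Y s) s) (hY0 : Y 0 = 1)
    (t : ℝ) (ht : 0 < t)
    (hint : (∫ τ in (0:ℝ)..t, l2norm (A τ)) < Real.pi) :
    ∀ x : ℝ, x ≤ 0 → (x : ℂ) ∉ spectrum ℂ (Y t) := by
  intro x hx hspec
  obtain ⟨v, hv0, hYv⟩ := exists_toEuclideanCLM_apply_eq_smul_of_mem_spectrum hspec
  set u : ℝ → EuclideanSpace ℂ n := fun s => Matrix.toEuclideanCLM (𝕜 := ℂ) (Y s) v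
  have hu : ∀ s, HasDerivAt u (Matrix.toEuclideanCLM (𝕜 := ℂ) (A s) (u s)) s := fun s => by
    simpa [map_mul] using (hY s).toEuclideanCLM_apply v
  have hbound : ∀ s, ‖Matrix.toEuclideanCLM (𝕜 := ℂ) (A s) (u s)‖ ≤ l2norm (A s) * ‖u s‖ :=
    fun s => ContinuousLinearMap.le_opNorm _ _
  have hg : Continuous fun s => l2norm (A s) := continuous_l2norm.comp hA
  obtain ⟨K, hK⟩ := (isCompact_Icc (a := 0) (b := t)).exists_bound_of_continuousOn hg.continuousOn
  have hu0 : ∀ s ∈ Icc 0 t, u s ≠ 0 := fun s hs hus => hv0 <| by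
    simpa [u, hY0] using eq_zero_of_norm_deriv_le_mul_norm_of_eq_zero_left (K := K)
      (fun r _ => hu r) hus (fun r hr => (hbound r).trans <| mul_le_mul_of_nonneg_right
        ((le_abs_self _).trans (hK r ⟨hr.1, hr.2.trans hs.2⟩)) (norm_nonneg _)) 0 ⟨le_rfl, hs.1⟩
  have hangle := angle_le_integral_of_norm_deriv_le_mul_norm ht.le (fun s _ => hu s) hu0 hg
    (fun s _ => hbound s)
  have hx0 : x < 0 := hx.lt_of_ne fun h => hu0 t ⟨ht.le, le_rfl⟩ (by simp [u, hYv, h])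
  have hut : u t = x • u 0 := by simp [u, hY0, hYv, Complex.coe_smul]
  rw [hut, angle_smul_right_of_neg _ _ hx0, angle_self_neg_of_nonzero (by simpa [u, hY0])]
    at hangle
  linarith
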